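/- arXiv:1512.05915 — 2 statements merged into one kernel-verified Lean document; each statement's English description precedes it below -/
import Mathlib

section
/- Assume the serving-link model below, and let x > 0. Set Δ₁ = (M N P_u β_LoS/(x δ²))^{1/α_LoS} and Δ₂ = (M N P_u β_NLoS/(x δ²))^{1/α_NLoS}. Then the cumulative distribution function of the receive SNR satisfies P(SNR < x) = 𝟙(D > Δ₁) · 2πρ ∫₀^D t f_Pr(t) e^{−2πρ[Θ(t) + Ξ(φ_LoS(t))]} dt + 2πρ ∫_{max{D,Δ₁}}^∞ t f_Pr(t) e^{−2πρ[Θ(t) + Ξ(φ_LoS(t))]} dt + 𝟙(D > Δ₂) · 2πρ ∫₀^D t (1 − f_Pr(t)) e^{−2πρ[Θ(φ_NLoS(t)) + Ξ(t)]} dt + 2πρ ∫_{max{D,Δ₂}}^∞ t (1 − f_Pr(t)) e^{−2πρ[Θ(φ_NLoS(t)) + Ξ(t)]} dt, where 𝟙(A) is the indicator of condition A. -/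
open MeasureTheory

lemma snr_aux {C δ2 x α Δ m : ℝ} (hC : 0 < C) (hδ2 : 0 < δ2) (hx : 0 < x)
    (hα : 0 < α) (hm : 0 < m) (hΔ : Δ = (C / (x * δ2)) ^ (1 / α)) :
    C * m ^ (-α) / δ2 < x ↔ Δ < m := by
  have hq : 0 < C / (x * δ2) := div_pos hC (mul_pos hx hδ2)
  have hΔpos : 0 < Δ := hΔ ▸ Real.rpow_pos_of_pos hq _
  have h1 : (1 / α) * (-α) = -1 := by field_simp
  have hΔα : Δ ^ (-α) = x * δ2 / C := by
    rw [hΔ, ← Real.rpow_mul hq.le, h1, Real.rpow_neg_one, inv_div]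
  rw [div_lt_iff₀ hδ2, mul_comm, ← lt_div_iff₀ hC, ← hΔα]
  exact Real.rpow_lt_rpow_iff_of_neg hm hΔpos (neg_neg_iff_pos.mpr hα)

lemma snr_split (g : ℝ → ENNReal) {D Δ : ℝ} (hD : 0 < D) :
    ∫⁻ t in Set.Ici 0 ∩ {t | Δ < max t D}, g t
      = (if D > Δ then ∫⁻ t in Set.Ioc (0:ℝ) D, g t else 0)
        + ∫⁻ t in Set.Ioi (max D Δ), g t := by
  by_cases hcase : D > Δ
  · have hA : Set.Ici (0:ℝ) ∩ {t | Δ < max t D} = Set.Ici 0 := by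
      ext t
      simp only [Set.mem_inter_iff, Set.mem_setOf_eq, Set.mem_Ici, and_iff_left_iff_imp]
      exact fun _ => lt_of_lt_of_le hcase (le_max_right _ _)
    rw [hA, if_pos hcase, max_eq_left hcase.le,
      setLIntegral_congr (Ioi_ae_eq_Ici (a := (0:ℝ))).symm,
      ← Set.Ioc_union_Ioi_eq_Ioi hD.le,
      lintegral_union measurableSet_Ioi]
    rw [Set.disjoint_left]
    rintro t ⟨-, h1⟩ h2
    exact absurd h2 (not_lt.mpr h1)
  · push_neg at hcase
    have hΔ0 : 0 < Δ := lt_of_lt_of_le hD hcase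
    have hA : Set.Ici (0:ℝ) ∩ {t | Δ < max t D} = Set.Ioi Δ := by
      ext t
      simp only [Set.mem_inter_iff, Set.mem_setOf_eq, Set.mem_Ici, Set.mem_Ioi]
      constructor
      · rintro ⟨-, h⟩
        rcases max_cases t D with ⟨he, -⟩ | ⟨he, -⟩
        · rwa [he] at h
        · exact absurd (he ▸ h) (not_lt.mpr hcase)
      · exact fun h => ⟨(hΔ0.trans h).le, lt_of_lt_of_le h (le_max_left _ _)⟩
    rw [hA, if_neg (not_lt.mpr hcase), max_eq_right hcase, zero_add]

/-- In the serving-link model (distance `R`, link type `T` with joint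
law given by the stated LoS/NLoS densities), the CDF of the receive SNR
`SNR = M N P_u β_T (max{R,D})^{−α_T} / δ²` at threshold `x > 0` equals
`𝟙(D>Δ₁)·∫₀^D densL + ∫_{max{D,Δ₁}}^∞ densL + 𝟙(D>Δ₂)·∫₀^D densN + ∫_{max{D,Δ₂}}^∞ densN`,
with `Δ₁ = (MNP_uβ_LoS/(xδ²))^{1/α_LoS}` and `Δ₂ = (MNP_uβ_NLoS/(xδ²))^{1/α_NLoS}`. -/
theorem snr_cdf {Ω : Type*} [MeasurableSpace Ω] (μ : Measure Ω) [IsProbabilityMeasure μ]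
    -- serving-link model
    (ρ : ℝ) (hρ : 0 < ρ)
    (fPr : ℝ → ℝ) (hfm : Measurable fPr) (hf0 : ∀ t, 0 ≤ fPr t) (hf1 : ∀ t, fPr t ≤ 1)
    (βL βN αL αN : ℝ) (hβL : 0 < βL) (hβN : 0 < βN) (hαL : 0 < αL) (hαN : 0 < αN)
    (Θ Ξ φLoS φNLoS : ℝ → ℝ)
    (hΘ : ∀ y, Θ y = ∫ t in Set.Ioc (0 : ℝ) y, t * fPr t)
    (hΞ : ∀ y, Ξ y = ∫ t in Set.Ioc (0 : ℝ) y, t * (1 - fPr t))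
    (hφL : ∀ y, φLoS y = (βN / βL) ^ (1 / αN) * y ^ (αL / αN))
    (hφN : ∀ y, φNLoS y = (βL / βN) ^ (1 / αL) * y ^ (αN / αL))
    (densL densN : ℝ → ℝ)
    (hdL : ∀ t, densL t = 2 * Real.pi * ρ * t * fPr t *
      Real.exp (-(2 * Real.pi * ρ) * (Θ t + Ξ (φLoS t))))
    (hdN : ∀ t, densN t = 2 * Real.pi * ρ * t * (1 - fPr t) *
      Real.exp (-(2 * Real.pi * ρ) * (Θ (φNLoS t) + Ξ t)))
    (R : Ω → ℝ) (T : Ω → Bool) (hRm : Measurable R) (hTm : Measurable T)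
    (hR0 : ∀ ω, 0 ≤ R ω)
    (hlawL : ∀ A : Set ℝ, MeasurableSet A → A ⊆ Set.Ici 0 →
      μ {ω | R ω ∈ A ∧ T ω = true} = ∫⁻ t in A, ENNReal.ofReal (densL t))
    (hlawN : ∀ A : Set ℝ, MeasurableSet A → A ⊆ Set.Ici 0 →
      μ {ω | R ω ∈ A ∧ T ω = false} = ∫⁻ t in A, ENNReal.ofReal (densN t))
    -- SNR model
    (M N : ℕ) (hM : 0 < M) (hN : 0 < N)
    (Pu δ2 D : ℝ) (hPu : 0 < Pu) (hδ2 : 0 < δ2) (hD : 0 < D)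
    (SNR : Ω → ℝ)
    (hSNR : ∀ ω, SNR ω = M * N * Pu * (if T ω then βL else βN) *
      (max (R ω) D) ^ (-(if T ω then αL else αN)) / δ2)
    (x : ℝ) (hx : 0 < x) (Δ1 Δ2 : ℝ)
    (hΔ1 : Δ1 = (M * N * Pu * βL / (x * δ2)) ^ (1 / αL))
    (hΔ2 : Δ2 = (M * N * Pu * βN / (x * δ2)) ^ (1 / αN)) :
    μ {ω | SNR ω < x}
      = (if D > Δ1 then ∫⁻ t in Set.Ioc (0 : ℝ) D, ENNReal.ofReal (densL t) else 0)
        + (∫⁻ t in Set.Ioi (max D Δ1), ENNReal.ofReal (densL t))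
        + (if D > Δ2 then ∫⁻ t in Set.Ioc (0 : ℝ) D, ENNReal.ofReal (densN t) else 0)
        + ∫⁻ t in Set.Ioi (max D Δ2), ENNReal.ofReal (densN t) := by
  have hM' : (0:ℝ) < (M:ℝ) := Nat.cast_pos.mpr hM
  have hN' : (0:ℝ) < (N:ℝ) := Nat.cast_pos.mpr hN
  have hCL : (0:ℝ) < (M:ℝ) * (N:ℝ) * Pu * βL :=
    mul_pos (mul_pos (mul_pos hM' hN') hPu) hβL
  have hCN : (0:ℝ) < (M:ℝ) * (N:ℝ) * Pu * βN :=
    mul_pos (mul_pos (mul_pos hM' hN') hPu) hβN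
  have hALm : MeasurableSet (Set.Ici (0:ℝ) ∩ {t | Δ1 < max t D}) :=
    measurableSet_Ici.inter
      (measurableSet_lt measurable_const (measurable_id.max measurable_const))
  have hANm : MeasurableSet (Set.Ici (0:ℝ) ∩ {t | Δ2 < max t D}) :=
    measurableSet_Ici.inter
      (measurableSet_lt measurable_const (measurable_id.max measurable_const))
  have hset : {ω | SNR ω < x}
      = {ω | R ω ∈ Set.Ici (0:ℝ) ∩ {t | Δ1 < max t D} ∧ T ω = true}
        ∪ {ω | R ω ∈ Set.Ici (0:ℝ) ∩ {t | Δ2 < max t D} ∧ T ω = false} := by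
    ext ω
    have hm : 0 < max (R ω) D := lt_of_lt_of_le hD (le_max_right _ _)
    simp only [Set.mem_setOf_eq, Set.mem_union, Set.mem_inter_iff, Set.mem_Ici]
    cases hT : T ω
    · have hkey : SNR ω < x ↔ Δ2 < max (R ω) D := by
        rw [hSNR ω, hT]
        simpa using snr_aux hCN hδ2 hx hαN hm hΔ2
      simp [hT, hkey, hR0 ω]
    · have hkey : SNR ω < x ↔ Δ1 < max (R ω) D := by
        rw [hSNR ω, hT]
        simpa using snr_aux hCL hδ2 hx hαL hm hΔ1
      simp [hT, hkey, hR0 ω]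
  have hmeasN : MeasurableSet {ω | R ω ∈ Set.Ici (0:ℝ) ∩ {t | Δ2 < max t D} ∧ T ω = false} :=
    (hRm hANm).inter (hTm (measurableSet_singleton false))
  have hdisj : Disjoint
      {ω | R ω ∈ Set.Ici (0:ℝ) ∩ {t | Δ1 < max t D} ∧ T ω = true}
      {ω | R ω ∈ Set.Ici (0:ℝ) ∩ {t | Δ2 < max t D} ∧ T ω = false} := by
    rw [Set.disjoint_left]
    rintro ω ⟨-, h1⟩ ⟨-, h2⟩
    simp [h1] at h2
  rw [hset, measure_union hdisj hmeasN,
    hlawL _ hALm Set.inter_subset_left, hlawN _ hANm Set.inter_subset_left,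
    snr_split _ hD, snr_split _ hD]
  abel
end

section
/- Assume the serving-link model below, with base station transmit power P_mm > 0 and positive integers M, N. Then the average receive power from the serving base station satisfies E[ N M P_mm β_T (max{R, D})^{−α_T} ] = N M P_mm · 2πρ · { β_LoS D^{−α_LoS} ∫₀^D t f_Pr(t) e^{−2πρ[Θ(t) + Ξ(φ_LoS(t))]} dt + β_LoS ∫_D^∞ t^{1−α_LoS} f_Pr(t) e^{−2πρ[Θ(t) + Ξ(φ_LoS(t))]} dt + β_NLoS D^{−α_NLoS} ∫₀^D t (1 − f_Pr(t)) e^{−2πρ[Θ(φ_NLoS(t)) + Ξ(t)]} dt + β_NLoS ∫_D^∞ t^{1−α_NLoS} (1 − f_Pr(t)) e^{−2πρ[Θ(φ_NLoS(t)) + Ξ(t)]} dt }, and this quantity is a lower bound for the average total receive power (which additionally includes the nonnegative interference contribution). -/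
/-!
On the event `{T = b}` the model prescribes the law of `R` by a density on `[0, ∞)`, so the
restriction of `μ` to that event, pushed forward by `R`, is Lebesgue measure on `[0, ∞)` with that
density. The average serving power is therefore a sum of two one-dimensional integrals, one per
link type; splitting each at `D`, where `max t D` switches from `D` to `t`, gives the four terms.
-/

open MeasureTheory Set
open scoped ENNReal

theorem measurable_setIntegral_Ioc {F : ℝ → ℝ} (hF : Measurable F) (a : ℝ) :
    Measurable fun y => ∫ t in Ioc a y, F t := by
  have hjoint : StronglyMeasurable fun p : ℝ × ℝ => (Ioc a p.1).indicator F p.2 := by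
    have hs : MeasurableSet {p : ℝ × ℝ | p.2 ∈ Ioc a p.1} :=
      (measurableSet_lt measurable_const measurable_snd).inter
        (measurableSet_le measurable_snd measurable_fst)
    exact (Measurable.ite hs (hF.comp measurable_snd) measurable_const).stronglyMeasurable
  simpa only [integral_indicator measurableSet_Ioc] using hjoint.integral_prod_right'.measurable

theorem setLIntegral_Ici_mul_max_rpow {c P β α D : ℝ} (hc : 0 ≤ c) (hP : 0 ≤ P) (hβ : 0 ≤ β)
    (hD : 0 ≤ D) {p w : ℝ → ℝ} (hp : ∀ t, 0 ≤ p t) (hw : ∀ t, 0 ≤ w t) :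
    ∫⁻ t in Ici 0, ENNReal.ofReal (c * t * p t * w t) * ENNReal.ofReal (P * β * max t D ^ (-α))
      = ENNReal.ofReal P * ENNReal.ofReal c *
          (ENNReal.ofReal (β * D ^ (-α)) * (∫⁻ t in Ioc 0 D, ENNReal.ofReal (t * p t * w t))
            + ENNReal.ofReal β * ∫⁻ t in Ioi D, ENNReal.ofReal (t ^ (1 - α) * p t * w t)) := by
  have hsplit : Ici (0 : ℝ) =ᵐ[volume] (Ioc 0 D ∪ Ioi D : Set ℝ) := by
    rw [Ioc_union_Ioi_eq_Ioi hD]; exact Ioi_ae_eq_Ici.symm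
  have hPc : 0 ≤ P * c := mul_nonneg hP hc
  have hnear : ∫⁻ t in Ioc 0 D, ENNReal.ofReal (c * t * p t * w t) *
        ENNReal.ofReal (P * β * max t D ^ (-α))
      = ∫⁻ t in Ioc 0 D, ENNReal.ofReal P * ENNReal.ofReal c * ENNReal.ofReal (β * D ^ (-α)) *
          ENNReal.ofReal (t * p t * w t) := by
    refine setLIntegral_congr_fun measurableSet_Ioc fun t ht => ?_
    have hdens : 0 ≤ c * t * p t * w t :=
      mul_nonneg (mul_nonneg (mul_nonneg hc ht.1.le) (hp t)) (hw t)
    rw [max_eq_right ht.2, ← ENNReal.ofReal_mul hdens, ← ENNReal.ofReal_mul hP,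
      ← ENNReal.ofReal_mul hPc,
      ← ENNReal.ofReal_mul (mul_nonneg hPc (mul_nonneg hβ (Real.rpow_nonneg hD _)))]
    congr 1; ring
  have hfar : ∫⁻ t in Ioi D, ENNReal.ofReal (c * t * p t * w t) *
        ENNReal.ofReal (P * β * max t D ^ (-α))
      = ∫⁻ t in Ioi D, ENNReal.ofReal P * ENNReal.ofReal c * ENNReal.ofReal β *
          ENNReal.ofReal (t ^ (1 - α) * p t * w t) := by
    refine setLIntegral_congr_fun measurableSet_Ioi fun t (ht : D < t) => ?_
    have ht0 : 0 < t := hD.trans_lt ht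
    have hdens : 0 ≤ c * t * p t * w t :=
      mul_nonneg (mul_nonneg (mul_nonneg hc ht0.le) (hp t)) (hw t)
    have hrpow : t ^ (1 - α) = t * t ^ (-α) := by
      rw [sub_eq_add_neg, Real.rpow_add ht0, Real.rpow_one]
    rw [max_eq_left ht.le, ← ENNReal.ofReal_mul hdens, ← ENNReal.ofReal_mul hP,
      ← ENNReal.ofReal_mul hPc, ← ENNReal.ofReal_mul (mul_nonneg hPc hβ), hrpow]
    congr 1; ring
  rw [setLIntegral_congr hsplit, lintegral_union measurableSet_Ioi (Ioc_disjoint_Ioi le_rfl),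
    hnear, hfar, lintegral_const_mul' _ _ (by finiteness), lintegral_const_mul' _ _ (by finiteness)]
  ring

section

variable {Ω : Type*} [MeasurableSpace Ω] {μ : Measure Ω}

theorem lintegral_eq_setLIntegral_true_add_false {T : Ω → Bool} (hT : Measurable T)
    (F : Ω → ℝ≥0∞) :
    ∫⁻ ω, F ω ∂μ = ∫⁻ ω in {ω | T ω = true}, F ω ∂μ + ∫⁻ ω in {ω | T ω = false}, F ω ∂μ := by
  have hcompl : {ω | T ω = true}ᶜ = {ω | T ω = false} := by ext; simp
  have hS : MeasurableSet {ω | T ω = true} := hT (measurableSet_singleton true)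
  rw [← lintegral_add_compl F hS, hcompl]

variable {X : Type*} [MeasurableSpace X]

theorem map_restrict_eq_withDensity_of_law {R : Ω → X} (hR : Measurable R) {S : Set Ω}
    {K : Set X} (hK : MeasurableSet K) (hRK : ∀ ω, R ω ∈ K) {ν : Measure X} {f : X → ℝ≥0∞}
    (hlaw : ∀ A, MeasurableSet A → A ⊆ K → μ {ω | R ω ∈ A ∧ ω ∈ S} = ∫⁻ t in A, f t ∂ν) :
    (μ.restrict S).map R = (ν.restrict K).withDensity f := by
  ext A hA
  have hpre : R ⁻¹' A ∩ S = {ω | R ω ∈ A ∩ K ∧ ω ∈ S} := by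
    ext ω; simp [hRK ω]
  rw [Measure.map_apply hR hA, Measure.restrict_apply (hR hA), withDensity_apply _ hA,
    Measure.restrict_restrict hA, hpre, hlaw _ (hA.inter hK) inter_subset_right]

theorem setLIntegral_comp_eq_of_law {R : Ω → X} (hR : Measurable R) {S : Set Ω}
    {K : Set X} (hK : MeasurableSet K) (hRK : ∀ ω, R ω ∈ K) {ν : Measure X} {f : X → ℝ≥0∞}
    (hf : Measurable f)
    (hlaw : ∀ A, MeasurableSet A → A ⊆ K → μ {ω | R ω ∈ A ∧ ω ∈ S} = ∫⁻ t in A, f t ∂ν)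
    {g : X → ℝ≥0∞} (hg : Measurable g) :
    ∫⁻ ω in S, g (R ω) ∂μ = ∫⁻ t in K, f t * g t ∂ν := by
  rw [← lintegral_map hg hR, map_restrict_eq_withDensity_of_law hR hK hRK hlaw,
    lintegral_withDensity_eq_lintegral_mul _ hf hg]
  rfl

theorem setLIntegral_max_rpow_of_law {R : Ω → ℝ} (hR : Measurable R) (hR0 : ∀ ω, 0 ≤ R ω)
    {S : Set Ω} (hS : MeasurableSet S)
    {c P β α D : ℝ} (hc : 0 ≤ c) (hP : 0 ≤ P) (hβ : 0 ≤ β) (hD : 0 ≤ D)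
    {p w dens : ℝ → ℝ} (hpm : Measurable p) (hwm : Measurable w)
    (hp : ∀ t, 0 ≤ p t) (hw : ∀ t, 0 ≤ w t) (hdens : ∀ t, dens t = c * t * p t * w t)
    (hlaw : ∀ A : Set ℝ, MeasurableSet A → A ⊆ Ici 0 →
      μ {ω | R ω ∈ A ∧ ω ∈ S} = ∫⁻ t in A, ENNReal.ofReal (dens t))
    {F : Ω → ℝ≥0∞} (hF : ∀ ω ∈ S, F ω = ENNReal.ofReal (P * β * max (R ω) D ^ (-α))) :
    ∫⁻ ω in S, F ω ∂μ
      = ENNReal.ofReal P * ENNReal.ofReal c *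
          (ENNReal.ofReal (β * D ^ (-α)) * (∫⁻ t in Ioc 0 D, ENNReal.ofReal (t * p t * w t))
            + ENNReal.ofReal β * ∫⁻ t in Ioi D, ENNReal.ofReal (t ^ (1 - α) * p t * w t)) := by
  have hdensm : Measurable fun t => ENNReal.ofReal (dens t) := by
    rw [funext hdens]; fun_prop
  rw [setLIntegral_congr_fun hS hF,
    setLIntegral_comp_eq_of_law hR measurableSet_Ici hR0 hdensm hlaw
      (g := fun r => ENNReal.ofReal (P * β * max r D ^ (-α))) (by fun_prop)]
  simp only [hdens]
  exact setLIntegral_Ici_mul_max_rpow hc hP hβ hD hp hw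

end

theorem average_serving_power_general {Ω : Type*} [MeasurableSpace Ω]
    (μ : Measure Ω)
    -- serving-link model
    (ρ : ℝ) (hρ : 0 < ρ)
    (fPr : ℝ → ℝ) (hfm : Measurable fPr) (hf0 : ∀ t, 0 ≤ fPr t) (hf1 : ∀ t, fPr t ≤ 1)
    (βL βN αL αN : ℝ) (hβL : 0 < βL) (hβN : 0 < βN)
    (Θ Ξ φLoS φNLoS : ℝ → ℝ)
    (hΘ : ∀ y, Θ y = ∫ t in Set.Ioc (0 : ℝ) y, t * fPr t)
    (hΞ : ∀ y, Ξ y = ∫ t in Set.Ioc (0 : ℝ) y, t * (1 - fPr t))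
    (hφL : ∀ y, φLoS y = (βN / βL) ^ (1 / αN) * y ^ (αL / αN))
    (hφN : ∀ y, φNLoS y = (βL / βN) ^ (1 / αL) * y ^ (αN / αL))
    (densL densN : ℝ → ℝ)
    (hdL : ∀ t, densL t = 2 * Real.pi * ρ * t * fPr t *
      Real.exp (-(2 * Real.pi * ρ) * (Θ t + Ξ (φLoS t))))
    (hdN : ∀ t, densN t = 2 * Real.pi * ρ * t * (1 - fPr t) *
      Real.exp (-(2 * Real.pi * ρ) * (Θ (φNLoS t) + Ξ t)))
    (R : Ω → ℝ) (T : Ω → Bool) (hRm : Measurable R) (hTm : Measurable T)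
    (hR0 : ∀ ω, 0 ≤ R ω)
    (hlawL : ∀ A : Set ℝ, MeasurableSet A → A ⊆ Set.Ici 0 →
      μ {ω | R ω ∈ A ∧ T ω = true} = ∫⁻ t in A, ENNReal.ofReal (densL t))
    (hlawN : ∀ A : Set ℝ, MeasurableSet A → A ⊆ Set.Ici 0 →
      μ {ω | R ω ∈ A ∧ T ω = false} = ∫⁻ t in A, ENNReal.ofReal (densN t))
    -- power transfer model
    (M N : ℕ) (Pmm D : ℝ) (hPmm : 0 < Pmm) (hD : 0 < D)
    (En1 : Ω → ℝ)
    (hEn1 : ∀ ω, En1 ω = N * M * Pmm * (if T ω then βL else βN) *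
      (max (R ω) D) ^ (-(if T ω then αL else αN))) :
    (∫⁻ ω, ENNReal.ofReal (En1 ω) ∂μ)
        = ENNReal.ofReal ((N : ℝ) * M * Pmm) * ENNReal.ofReal (2 * Real.pi * ρ) *
          (ENNReal.ofReal (βL * D ^ (-αL)) *
              (∫⁻ t in Set.Ioc (0 : ℝ) D, ENNReal.ofReal (t * fPr t *
                Real.exp (-(2 * Real.pi * ρ) * (Θ t + Ξ (φLoS t)))))
            + ENNReal.ofReal βL *
              (∫⁻ t in Set.Ioi D, ENNReal.ofReal (t ^ (1 - αL) * fPr t *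
                Real.exp (-(2 * Real.pi * ρ) * (Θ t + Ξ (φLoS t)))))
            + ENNReal.ofReal (βN * D ^ (-αN)) *
              (∫⁻ t in Set.Ioc (0 : ℝ) D, ENNReal.ofReal (t * (1 - fPr t) *
                Real.exp (-(2 * Real.pi * ρ) * (Θ (φNLoS t) + Ξ t))))
            + ENNReal.ofReal βN *
              (∫⁻ t in Set.Ioi D, ENNReal.ofReal (t ^ (1 - αN) * (1 - fPr t) *
                Real.exp (-(2 * Real.pi * ρ) * (Θ (φNLoS t) + Ξ t)))))
      ∧ ∀ En2 : Ω → ℝ, (∀ ω, 0 ≤ En2 ω) →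
          (∫⁻ ω, ENNReal.ofReal (En1 ω) ∂μ)
            ≤ ∫⁻ ω, ENNReal.ofReal (En1 ω + En2 ω) ∂μ := by
  refine ⟨?_, fun En2 hEn2 => lintegral_mono fun ω =>
    ENNReal.ofReal_le_ofReal (le_add_of_nonneg_right (hEn2 ω))⟩
  have hΘm : Measurable Θ := by
    rw [funext hΘ]; exact measurable_setIntegral_Ioc (by fun_prop) 0
  have hΞm : Measurable Ξ := by
    rw [funext hΞ]; exact measurable_setIntegral_Ioc (by fun_prop) 0
  have hφLm : Measurable φLoS := by rw [funext hφL]; fun_prop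
  have hφNm : Measurable φNLoS := by rw [funext hφN]; fun_prop
  have hc : 0 ≤ 2 * Real.pi * ρ := mul_nonneg (mul_nonneg zero_le_two Real.pi_pos.le) hρ.le
  have hP : 0 ≤ (N : ℝ) * M * Pmm := mul_nonneg (mul_nonneg N.cast_nonneg M.cast_nonneg) hPmm.le
  have hLoS := setLIntegral_max_rpow_of_law (S := {ω | T ω = true}) (α := αL) hRm hR0
    (hTm (measurableSet_singleton true)) hc hP hβL.le hD.le
    hfm (by fun_prop) hf0 (fun _ => (Real.exp_pos _).le) hdL hlawL
    (F := fun ω => ENNReal.ofReal (En1 ω)) (fun ω (hω : T ω = true) => by simp [hEn1, hω])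
  have hNLoS := setLIntegral_max_rpow_of_law (S := {ω | T ω = false}) (α := αN) hRm hR0
    (hTm (measurableSet_singleton false)) hc hP hβN.le hD.le
    (by fun_prop) (by fun_prop) (fun t => sub_nonneg.mpr (hf1 t)) (fun _ => (Real.exp_pos _).le)
    hdN hlawN (F := fun ω => ENNReal.ofReal (En1 ω)) (fun ω (hω : T ω = false) => by simp [hEn1, hω])
  rw [lintegral_eq_setLIntegral_true_add_false hTm, hLoS, hNLoS]
  ring

/-- In the serving-link model, the average receive power from the
serving base station, `E[N M P_mm β_T (max{R,D})^{−α_T}]`, equals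
`N M P_mm · 2πρ · { β_LoS D^{−α_LoS} ∫₀^D t f_Pr(t) e^{−2πρ[Θ(t)+Ξ(φ_LoS(t))]} dt
 + β_LoS ∫_D^∞ t^{1−α_LoS} f_Pr(t) e^{−2πρ[Θ(t)+Ξ(φ_LoS(t))]} dt
 + β_NLoS D^{−α_NLoS} ∫₀^D t (1−f_Pr(t)) e^{−2πρ[Θ(φ_NLoS(t))+Ξ(t)]} dt
 + β_NLoS ∫_D^∞ t^{1−α_NLoS} (1−f_Pr(t)) e^{−2πρ[Θ(φ_NLoS(t))+Ξ(t)]} dt }`,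
and this is a lower bound for the average total receive power, which additionally
contains a nonnegative interference contribution `En₂`. -/
theorem average_serving_power {Ω : Type*} [MeasurableSpace Ω]
    (μ : Measure Ω) [IsProbabilityMeasure μ]
    -- serving-link model
    (ρ : ℝ) (hρ : 0 < ρ)
    (fPr : ℝ → ℝ) (hfm : Measurable fPr) (hf0 : ∀ t, 0 ≤ fPr t) (hf1 : ∀ t, fPr t ≤ 1)
    (βL βN αL αN : ℝ) (hβL : 0 < βL) (hβN : 0 < βN) (hαL : 0 < αL) (hαN : 0 < αN)
    (Θ Ξ φLoS φNLoS : ℝ → ℝ)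
    (hΘ : ∀ y, Θ y = ∫ t in Set.Ioc (0 : ℝ) y, t * fPr t)
    (hΞ : ∀ y, Ξ y = ∫ t in Set.Ioc (0 : ℝ) y, t * (1 - fPr t))
    (hφL : ∀ y, φLoS y = (βN / βL) ^ (1 / αN) * y ^ (αL / αN))
    (hφN : ∀ y, φNLoS y = (βL / βN) ^ (1 / αL) * y ^ (αN / αL))
    (densL densN : ℝ → ℝ)
    (hdL : ∀ t, densL t = 2 * Real.pi * ρ * t * fPr t *
      Real.exp (-(2 * Real.pi * ρ) * (Θ t + Ξ (φLoS t))))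
    (hdN : ∀ t, densN t = 2 * Real.pi * ρ * t * (1 - fPr t) *
      Real.exp (-(2 * Real.pi * ρ) * (Θ (φNLoS t) + Ξ t)))
    (R : Ω → ℝ) (T : Ω → Bool) (hRm : Measurable R) (hTm : Measurable T)
    (hR0 : ∀ ω, 0 ≤ R ω)
    (hlawL : ∀ A : Set ℝ, MeasurableSet A → A ⊆ Set.Ici 0 →
      μ {ω | R ω ∈ A ∧ T ω = true} = ∫⁻ t in A, ENNReal.ofReal (densL t))
    (hlawN : ∀ A : Set ℝ, MeasurableSet A → A ⊆ Set.Ici 0 →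
      μ {ω | R ω ∈ A ∧ T ω = false} = ∫⁻ t in A, ENNReal.ofReal (densN t))
    -- power transfer model
    (M N : ℕ) (hM : 0 < M) (hN : 0 < N) (Pmm D : ℝ) (hPmm : 0 < Pmm) (hD : 0 < D)
    (En1 : Ω → ℝ)
    (hEn1 : ∀ ω, En1 ω = N * M * Pmm * (if T ω then βL else βN) *
      (max (R ω) D) ^ (-(if T ω then αL else αN))) :
    (∫⁻ ω, ENNReal.ofReal (En1 ω) ∂μ)
        = ENNReal.ofReal ((N : ℝ) * M * Pmm) * ENNReal.ofReal (2 * Real.pi * ρ) *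
          (ENNReal.ofReal (βL * D ^ (-αL)) *
              (∫⁻ t in Set.Ioc (0 : ℝ) D, ENNReal.ofReal (t * fPr t *
                Real.exp (-(2 * Real.pi * ρ) * (Θ t + Ξ (φLoS t)))))
            + ENNReal.ofReal βL *
              (∫⁻ t in Set.Ioi D, ENNReal.ofReal (t ^ (1 - αL) * fPr t *
                Real.exp (-(2 * Real.pi * ρ) * (Θ t + Ξ (φLoS t)))))
            + ENNReal.ofReal (βN * D ^ (-αN)) *
              (∫⁻ t in Set.Ioc (0 : ℝ) D, ENNReal.ofReal (t * (1 - fPr t) *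
                Real.exp (-(2 * Real.pi * ρ) * (Θ (φNLoS t) + Ξ t))))
            + ENNReal.ofReal βN *
              (∫⁻ t in Set.Ioi D, ENNReal.ofReal (t ^ (1 - αN) * (1 - fPr t) *
                Real.exp (-(2 * Real.pi * ρ) * (Θ (φNLoS t) + Ξ t)))))
      ∧ ∀ En2 : Ω → ℝ, (∀ ω, 0 ≤ En2 ω) →
          (∫⁻ ω, ENNReal.ofReal (En1 ω) ∂μ)
            ≤ ∫⁻ ω, ENNReal.ofReal (En1 ω + En2 ω) ∂μ :=
  average_serving_power_general μ ρ hρ fPr hfm hf0 hf1 βL βN αL αN hβL hβN Θ Ξ φLoS φNLoS hΘ hΞ hφL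
    hφN densL densN hdL hdN R T hRm hTm hR0 hlawL hlawN M N Pmm D hPmm hD En1 hEn1
end
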